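/- arXiv:2507.16482 — 7 statements merged into one kernel-verified Lean document; each statement's English description precedes it below -/
import Mathlib

section
/- Let a, b, w ∈ A⁺ and x ∈ A be such that b + x ∈ A⁺, (a, w) controls b, and (a, w) controls b + 2x. Then every one-vertex affine configuration C containing the edges {a, a + w} and {b, b + x} can be transformed, by a finite sequence of slide and swap moves, into the configuration obtained from C by replacing the edge {b, b + x} with the edge {b + x, b + 2x} and leaving all other edges (including {a, a + w}) unchanged. -/
/-- The abelian group `A := ℤ/2ℤ ⊕ ⊕_{i≥1} ℤ`. -/
abbrev A : Type := ZMod 2 × (ℕ →₀ ℤ)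

/-- `a ∈ A⁺`. -/
def Apos (a : A) : Prop := ∀ i : ℕ, 0 ≤ a.2 i

/-- The support of an element of `A` (ignoring the `ℤ/2ℤ` component). -/
def suppA (a : A) : Finset ℕ := a.2.support

/-- `(a, w)` controls `b`: `b − a ∈ A⁺` and `supp (b − a) ⊆ supp w`. -/
def Controls (a w b : A) : Prop := Apos (b - a) ∧ suppA (b - a) ⊆ suppA w

/-- A one-vertex affine configuration: a finite multiset of unordered pairs of
points of `A⁺`. -/
def IsConfig (C : Multiset (Sym2 A)) : Prop := ∀ e ∈ C, ∀ p ∈ e, Apos p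

/-- A slide move: given two distinct members `{p, q}` and `{r, s}` of `C` with
`s = p + t` for some `t ∈ A⁺`, replace `{r, s}` by `{r, q + t}`. -/
def SlideMove (C C' : Multiset (Sym2 A)) : Prop :=
  ∃ (p q r s' t : A) (rest : Multiset (Sym2 A)),
    Apos t ∧ s' = p + t ∧
    C = s(p, q) ::ₘ s(r, s') ::ₘ rest ∧
    C' = s(p, q) ::ₘ s(r, q + t) ::ₘ rest

/-- A swap move: given two distinct members `{p, p + w₁}` and `{q, q + w₂}` of `C`
with `w₁, w₂ ∈ A⁺`, `p ≤ q ≤ p + k₁ • w₁` and `p ≤ q ≤ p + k₂ • w₂` for some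
`k₁ k₂ : ℕ`, replace them by `{q, q + w₁}` and `{p, p + w₂}`. -/
def SwapMove (C C' : Multiset (Sym2 A)) : Prop :=
  ∃ (p q w₁ w₂ : A) (k₁ k₂ : ℕ) (rest : Multiset (Sym2 A)),
    Apos w₁ ∧ Apos w₂ ∧ Apos (q - p) ∧
    Apos (p + k₁ • w₁ - q) ∧ Apos (p + k₂ • w₂ - q) ∧
    C = s(p, p + w₁) ::ₘ s(q, q + w₂) ::ₘ rest ∧
    C' = s(q, q + w₁) ::ₘ s(p, p + w₂) ::ₘ rest

/-- A move is a slide move or a swap move. -/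
def ConfigMove (C C' : Multiset (Sym2 A)) : Prop := SlideMove C C' ∨ SwapMove C C'

lemma evadd (u v : A) (i : ℕ) : (u+v).2 i = u.2 i + v.2 i := rfl
lemma evsub (u v : A) (i : ℕ) : (u-v).2 i = u.2 i - v.2 i := rfl
lemma evsmul (n : ℕ) (u : A) (i : ℕ) : (n • u).2 i = (n : ℤ) * u.2 i := by simp

lemma slide_up (a w r s : A) (h : Apos (s - a)) (rest : Multiset (Sym2 A)) :
    ConfigMove (s(a, a+w) ::ₘ s(r, s) ::ₘ rest) (s(a, a+w) ::ₘ s(r, s + w) ::ₘ rest) := by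
  left
  refine ⟨a, a+w, r, s, s - a, rest, h, by abel, rfl, ?_⟩
  rw [show a + w + (s - a) = s + w from by abel]

lemma slide_down (a w r s : A) (h : Apos (s - a)) (rest : Multiset (Sym2 A)) :
    ConfigMove (s(a, a+w) ::ₘ s(r, s + w) ::ₘ rest) (s(a, a+w) ::ₘ s(r, s) ::ₘ rest) := by
  left
  refine ⟨a + w, a, r, s + w, s - a, rest, h, by abel, ?_, ?_⟩
  · rw [Sym2.eq_swap (a := a + w) (b := a)]
  · rw [Sym2.eq_swap (a := a + w) (b := a), show a + (s - a) = s from by abel]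

lemma slides_up (a w r s : A) (hw : Apos w) (h : Apos (s - a)) (rest : Multiset (Sym2 A)) (n : ℕ) :
    Relation.ReflTransGen ConfigMove (s(a, a+w) ::ₘ s(r, s) ::ₘ rest)
      (s(a, a+w) ::ₘ s(r, s + n • w) ::ₘ rest) := by
  induction n with
  | zero => simpa using Relation.ReflTransGen.refl
  | succ n ih =>
    refine ih.tail ?_
    have h' : Apos (s + n • w - a) := by
      intro i
      have h1 := h i; have h2 := hw i
      simp only [evsub] at h1
      simp only [evadd, evsub, evsmul]
      have : (0:ℤ) ≤ (n:ℤ) * w.2 i := mul_nonneg (by positivity) h2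
      linarith
    rw [show s + (n+1) • w = (s + n • w) + w from by rw [succ_nsmul]; abel]
    exact slide_up a w r (s + n • w) h' rest

lemma slides_down (a w r s : A) (hw : Apos w) (h : Apos (s - a)) (rest : Multiset (Sym2 A)) (n : ℕ) :
    Relation.ReflTransGen ConfigMove (s(a, a+w) ::ₘ s(r, s + n • w) ::ₘ rest)
      (s(a, a+w) ::ₘ s(r, s) ::ₘ rest) := by
  induction n with
  | zero => simpa using Relation.ReflTransGen.refl
  | succ n ih =>
    refine Relation.ReflTransGen.head ?_ ih
    have h' : Apos (s + n • w - a) := by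
      intro i
      have h1 := h i; have h2 := hw i
      simp only [evsub] at h1
      simp only [evadd, evsub, evsmul]
      have : (0:ℤ) ≤ (n:ℤ) * w.2 i := mul_nonneg (by positivity) h2
      linarith
    rw [show s + (n+1) • w = (s + n • w) + w from by rw [succ_nsmul]; abel]
    exact slide_down a w r (s + n • w) h' rest

lemma exist_bound (c wf : ℕ →₀ ℤ) (hw : ∀ i, 0 ≤ wf i) (h0 : ∀ i, wf i = 0 → c i ≤ 0) :
    ∃ k : ℕ, ∀ i, c i ≤ (k : ℤ) * wf i := by
  refine ⟨c.support.sup fun i => (c i).toNat, fun i => ?_⟩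
  by_cases hwi : wf i = 0
  · rw [hwi, mul_zero]; exact h0 i hwi
  · have h1 : (1:ℤ) ≤ wf i := by have := hw i; omega
    have hck : c i ≤ ((c.support.sup fun i => (c i).toNat : ℕ) : ℤ) := by
      by_cases hi : i ∈ c.support
      · calc c i ≤ ((c i).toNat : ℤ) := Int.self_le_toNat _
          _ ≤ _ := by exact_mod_cast Finset.le_sup (f := fun i => (c i).toNat) hi
      · rw [Finsupp.notMem_support_iff.mp hi]; positivity
    calc c i ≤ _ := hck
      _ = _ * 1 := (mul_one _).symm
      _ ≤ _ * wf i := by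
          apply mul_le_mul_of_nonneg_left h1; positivity

/-- Self-slide (Lemma 5.2): if `(a, w)` controls `b` and `b + 2x`, and `b + x ∈ A⁺`,
then any configuration containing the edges `{a, a + w}` and `{b, b + x}` can be
transformed by slides and swaps into the one where `{b, b + x}` is replaced by
`{b + x, b + 2x}`, all other edges unchanged. -/
theorem stmt_1 (a b w x : A) (ha : Apos a) (hb : Apos b) (hw : Apos w)
    (hbx : Apos (b + x))
    (h1 : Controls a w b) (h2 : Controls a w (b + 2 • x))
    (C : Multiset (Sym2 A)) (hC : IsConfig C) (rest : Multiset (Sym2 A))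
    (hCeq : C = s(a, a + w) ::ₘ s(b, b + x) ::ₘ rest) :
    Relation.ReflTransGen ConfigMove C
      (s(a, a + w) ::ₘ s(b + x, b + 2 • x) ::ₘ rest) := by
  subst hCeq
  obtain ⟨hba, hsba⟩ := h1
  obtain ⟨hb2xa, hsb2xa⟩ := h2
  -- vanishing off the support of w
  have hzb : ∀ i, w.2 i = 0 → (b - a).2 i = 0 := by
    intro i hwi
    by_contra hne
    exact (Finsupp.mem_support_iff.mp (hsba (Finsupp.mem_support_iff.mpr hne))) hwi
  have hz2 : ∀ i, w.2 i = 0 → (b + 2 • x - a).2 i = 0 := by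
    intro i hwi
    by_contra hne
    exact (Finsupp.mem_support_iff.mp (hsb2xa (Finsupp.mem_support_iff.mpr hne))) hwi
  have key2 : ∀ i, (b + 2 • x - a).2 i = b.2 i + 2 * x.2 i - a.2 i := by
    intro i
    simp only [evadd, evsub, evsmul]
    push_cast
    ring
  have hzx : ∀ i, w.2 i = 0 → x.2 i = 0 := by
    intro i hwi
    have e1 := hzb i hwi
    have e2 := hz2 i hwi
    rw [key2 i] at e2
    simp only [evsub] at e1
    linarith
  -- b + x - a ∈ A⁺
  have hbxa : Apos (b + x - a) := by
    intro i
    have h1' := hba i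
    have h2' := hb2xa i
    rw [key2 i] at h2'
    simp only [evsub] at h1'
    simp only [evadd, evsub]
    linarith
  -- choose N with  w ≤ x + N • w  componentwise
  obtain ⟨N, hN⟩ := exist_bound (w.2 - x.2) w.2 hw (by
    intro i hwi
    have := hzx i hwi
    simp only [Finsupp.coe_sub, Pi.sub_apply, hwi, this]
    norm_num)
  have hN' : ∀ i, w.2 i ≤ x.2 i + (N : ℤ) * w.2 i := by
    intro i
    have := hN i
    simp only [Finsupp.coe_sub, Pi.sub_apply] at this
    linarith
  have hvpos : Apos (x + N • w) := by
    intro i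
    have := hN' i
    have := hw i
    simp only [evadd, evsmul]
    linarith
  -- choose bounds kb, kc
  obtain ⟨kb, hkb⟩ := exist_bound (b - a).2 w.2 hw (by
    intro i hwi; rw [hzb i hwi])
  obtain ⟨kc, hkc⟩ := exist_bound (b + (x + N • w) - a).2 w.2 hw (by
    intro i hwi
    have e1 := hzb i hwi
    have e2 := hzx i hwi
    simp only [evadd, evsub, evsmul, hwi, e2] at *
    linarith)
  set K := kb + kc with hK
  have hKcast : ((K : ℕ) : ℤ) = (kb : ℤ) + (kc : ℤ) := by push_cast [hK]; ring
  have hKw : ∀ i, (b - a).2 i ≤ (K : ℤ) * w.2 i ∧ (b + (x + N • w) - a).2 i ≤ (K : ℤ) * w.2 i := by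
    intro i
    have h1' := hkb i
    have h2' := hkc i
    have hwi := hw i
    have e1 : (0:ℤ) ≤ (kb : ℤ) * w.2 i := mul_nonneg (by positivity) hwi
    have e2 : (0:ℤ) ≤ (kc : ℤ) * w.2 i := mul_nonneg (by positivity) hwi
    constructor <;> (rw [hKcast, add_mul]) <;> linarith
  have hKv : ∀ i, (K : ℤ) * w.2 i ≤ (K : ℤ) * (x + N • w : A).2 i := by
    intro i
    apply mul_le_mul_of_nonneg_left _ (by positivity)
    simp only [evadd, evsmul]
    exact hN' i
  -- swap conditions
  have c1 : Apos (a + K • w - b) := by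
    intro i
    have := (hKw i).1
    simp only [evadd, evsub, evsmul] at *
    linarith
  have c2 : Apos (a + K • (x + N • w) - b) := by
    intro i
    have h1' := (hKw i).1
    have h2' := hKv i
    have h3' : (0:ℤ) ≤ (N : ℤ) * w.2 i := mul_nonneg (by positivity) (hw i)
    simp only [evadd, evsub, evsmul] at *
    linarith
  have d1 : Apos (a + K • (x + N • w) - (b + (x + N • w))) := by
    intro i
    have h1' := (hKw i).2
    have h2' := hKv i
    simp only [evadd, evsub, evsmul] at *
    linarith
  have d2 : Apos (a + K • w - (b + (x + N • w))) := by
    intro i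
    have h1' := (hKw i).2
    simp only [evadd, evsub, evsmul] at *
    linarith
  have hbva : Apos (b + (x + N • w) - a) := by
    intro i
    have h1' := hbxa i
    have h3' : (0:ℤ) ≤ (N : ℤ) * w.2 i := mul_nonneg (by positivity) (hw i)
    simp only [evadd, evsub, evsmul] at *
    linarith
  have hbwa : Apos (b + w - a) := by
    intro i
    have h1' := hba i
    have h2' := hw i
    simp only [evadd, evsub] at *
    linarith
  -- the two swap moves
  have swap1 : ConfigMove (s(a, a + w) ::ₘ s(b, b + (x + N • w)) ::ₘ rest)
      (s(b, b + w) ::ₘ s(a, a + (x + N • w)) ::ₘ rest) :=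
    Or.inr ⟨a, b, w, x + N • w, K, K, rest, hw, hvpos, hba, c1, c2, rfl, rfl⟩
  have swap2 : ConfigMove
      (s(a, a + (x + N • w)) ::ₘ s(b + (x + N • w), (b + (x + N • w)) + w) ::ₘ rest)
      (s(b + (x + N • w), (b + (x + N • w)) + (x + N • w)) ::ₘ s(a, a + w) ::ₘ rest) :=
    Or.inr ⟨a, b + (x + N • w), x + N • w, w, K, K, rest, hvpos, hw, hbva, d1, d2, rfl, rfl⟩
  -- the chain
  refine (slides_up a w b (b + x) hw hbxa rest N).trans ?_
  rw [show (b + x) + N • w = b + (x + N • w) from by abel]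
  refine Relation.ReflTransGen.head swap1 ?_
  rw [Multiset.cons_swap]
  rw [Sym2.eq_swap (a := b) (b := b + w)]
  refine Relation.ReflTransGen.head (slide_up a (x + N • w) (b + w) b hba rest) ?_
  rw [Sym2.eq_swap (a := b + w) (b := b + (x + N • w))]
  refine Relation.ReflTransGen.head (slide_up a (x + N • w) (b + (x + N • w)) (b + w) hbwa rest) ?_
  rw [show (b + w) + (x + N • w) = (b + (x + N • w)) + w from by abel]
  refine Relation.ReflTransGen.head swap2 ?_
  rw [Multiset.cons_swap]
  rw [show (b + (x + N • w)) + (x + N • w) = (b + 2 • x) + (2 * N) • w from by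
    rw [mul_smul]; abel]
  refine (slides_down a w (b + (x + N • w)) (b + 2 • x) hw hb2xa rest (2 * N)).trans ?_
  rw [Sym2.eq_swap (a := b + (x + N • w)) (b := b + 2 • x)]
  rw [show b + (x + N • w) = (b + x) + N • w from by abel]
  refine (slides_down a w (b + 2 • x) (b + x) hw hbxa rest N).trans ?_
  rw [Sym2.eq_swap (a := b + 2 • x) (b := b + x)]
end

section
/- Let a, b, w ∈ A⁺ and x ∈ A with w + x ∈ A⁺. Suppose that (a, w) controls both b and b + x, and that (a, w + x) controls both b and b + x. Then every one-vertex affine configuration C containing the edges {a, a + w} and {b, b + x} can be transformed, by a finite sequence of slide and swap moves, into the configuration obtained from C by replacing the edge {a, a + w} with the edge {a, a + w + x} and leaving all other edges (including {b, b + x}) unchanged. -/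
/-- Pointwise value of a natural-scalar multiple. -/
lemma snd_nsmul_apply (k : ℕ) (v : A) (i : ℕ) : ((k • v).2) i = k * v.2 i := by
  induction k with
  | zero => simp
  | succ n ih =>
    rw [succ_nsmul]
    have h : ((n • v + v).2) i = (n • v).2 i + v.2 i := rfl
    rw [h, ih]; push_cast; ring

lemma apos_add {u v : A} (hu : Apos u) (hv : Apos v) : Apos (u + v) := fun i => by
  have h : (u + v).2 i = u.2 i + v.2 i := rfl
  rw [h]; exact add_nonneg (hu i) (hv i)

lemma suppA_add_subset (u v : A) : suppA (u + v) ⊆ suppA u ∪ suppA v :=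
  Finsupp.support_add

/-- Existence of the multiplier needed in swap moves. -/
lemma exists_k (p q v : A) (hv : Apos v) (hpq : Apos (q - p))
    (hs : suppA (q - p) ⊆ suppA v) : ∃ k : ℕ, Apos (p + k • v - q) := by
  classical
  refine ⟨(q - p).2.support.sup (fun j => ((q - p).2 j).toNat), fun i => ?_⟩
  set k := (q - p).2.support.sup (fun j => ((q - p).2 j).toNat) with hk
  have he : p + k • v - q = k • v - (q - p) := by abel
  rw [he]
  have h2 : (k • v - (q - p)).2 i = (k : ℤ) * v.2 i - (q - p).2 i := by
    have h3 : (k • v - (q - p)).2 i = (k • v).2 i - (q - p).2 i := rfl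
    rw [h3, snd_nsmul_apply]
  rw [h2]
  by_cases hi : (q - p).2 i = 0
  · rw [hi]
    have := hv i
    have : 0 ≤ (k : ℤ) * v.2 i := mul_nonneg (by positivity) (hv i)
    omega
  · have hmem : i ∈ suppA (q - p) := Finsupp.mem_support_iff.mpr hi
    have hvi : v.2 i ≠ 0 := Finsupp.mem_support_iff.mp (hs hmem)
    have hv1 : 1 ≤ v.2 i := by have := hv i; omega
    have hle : (q - p).2 i ≤ (k : ℤ) := by
      have h1 : ((q - p).2 i).toNat ≤ k :=
        Finset.le_sup (f := fun j => ((q - p).2 j).toNat) hmem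
      have h4 := Int.self_le_toNat ((q - p).2 i)
      omega
    nlinarith [Int.ofNat_nonneg k]

/-- Reverse slide (Lemma 5.3): if `w + x ∈ A⁺`, `(a, w)` controls `b` and `b + x`,
and `(a, w + x)` controls `b` and `b + x`, then any configuration containing the
edges `{a, a + w}` and `{b, b + x}` can be transformed by slides and swaps into
the one where `{a, a + w}` is replaced by `{a, a + w + x}`, all other edges
(including `{b, b + x}`) unchanged. -/
theorem stmt_2 (a b w x : A) (ha : Apos a) (hb : Apos b) (hw : Apos w)
    (hwx : Apos (w + x))
    (h1 : Controls a w b) (h2 : Controls a w (b + x))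
    (h3 : Controls a (w + x) b) (h4 : Controls a (w + x) (b + x))
    (C : Multiset (Sym2 A)) (hC : IsConfig C) (rest : Multiset (Sym2 A))
    (hCeq : C = s(a, a + w) ::ₘ s(b, b + x) ::ₘ rest) :
    Relation.ReflTransGen ConfigMove C
      (s(a, a + (w + x)) ::ₘ s(b, b + x) ::ₘ rest) := by
  classical
  subst hCeq
  obtain ⟨A1, S1⟩ := h1
  obtain ⟨A2, S2⟩ := h2
  obtain ⟨-, S3⟩ := h3
  obtain ⟨-, S4⟩ := h4
  -- derived positivity facts
  have A3 : Apos (b + w - a) := by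
    have e : b + w - a = b - a + w := by abel
    rw [e]; exact apos_add A1 hw
  have A5 : Apos (b + x - a + (w + x)) := apos_add A2 hwx
  have hq5 : Apos (b + (w + x) - a) := by
    have e : b + (w + x) - a = b - a + (w + x) := by abel
    rw [e]; exact apos_add A1 hwx
  have hs5a : suppA (b + (w + x) - a) ⊆ suppA (w + x) := by
    have e : b + (w + x) - a = (b - a) + (w + x) := by abel
    rw [e]
    exact (suppA_add_subset _ _).trans (Finset.union_subset S3 (le_refl _))
  have hs5b : suppA (b + (w + x) - a) ⊆ suppA w := by
    have e : b + (w + x) - a = (b + x - a) + w := by abel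
    rw [e]
    exact (suppA_add_subset _ _).trans (Finset.union_subset S2 (le_refl _))
  -- the nine moves
  have m1 : ConfigMove (s(a, a + w) ::ₘ s(b, b + x) ::ₘ rest)
      (s(a, a + w) ::ₘ s(b, b + (w + x)) ::ₘ rest) := by
    refine Or.inl ⟨a, a + w, b, b + x, b + x - a, rest, A2, by abel, rfl, ?_⟩
    rw [show a + w + (b + x - a) = b + (w + x) from by abel]
  have m2 : ConfigMove (s(a, a + w) ::ₘ s(b, b + (w + x)) ::ₘ rest)
      (s(a, a + (w + x)) ::ₘ s(b, b + w) ::ₘ rest) := by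
    obtain ⟨k1, hk1⟩ := exists_k a b w hw A1 S1
    obtain ⟨k2, hk2⟩ := exists_k a b (w + x) hwx A1 S3
    exact Or.inr ⟨a, b, w, w + x, k1, k2, rest, hw, hwx, A1, hk1, hk2, rfl,
      Multiset.cons_swap _ _ _⟩
  have m3 : ConfigMove (s(a, a + (w + x)) ::ₘ s(b, b + w) ::ₘ rest)
      (s(a, a + (w + x)) ::ₘ s(b + w, b + (w + x)) ::ₘ rest) := by
    refine Or.inl ⟨a, a + (w + x), b + w, b, b - a, rest, A1, by abel, ?_, ?_⟩
    · rw [Sym2.eq_swap (a := b) (b := b + w)]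
    · rw [show a + (w + x) + (b - a) = b + (w + x) from by abel]
  have m4 : ConfigMove (s(a, a + (w + x)) ::ₘ s(b + w, b + (w + x)) ::ₘ rest)
      (s(a, a + (w + x)) ::ₘ s(b + (w + x), b + (w + x) + w) ::ₘ rest) := by
    refine Or.inl ⟨a, a + (w + x), b + (w + x), b + w, b + w - a, rest, A3,
      by abel, ?_, ?_⟩
    · rw [Sym2.eq_swap (a := b + w) (b := b + (w + x))]
    · rw [show a + (w + x) + (b + w - a) = b + (w + x) + w from by abel]
  have m5 : ConfigMove (s(a, a + (w + x)) ::ₘ s(b + (w + x), b + (w + x) + w) ::ₘ rest)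
      (s(a, a + w) ::ₘ s(b + (w + x), b + (w + x) + (w + x)) ::ₘ rest) := by
    obtain ⟨k1, hk1⟩ := exists_k a (b + (w + x)) (w + x) hwx hq5 hs5a
    obtain ⟨k2, hk2⟩ := exists_k a (b + (w + x)) w hw hq5 hs5b
    exact Or.inr ⟨a, b + (w + x), w + x, w, k1, k2, rest, hwx, hw, hq5, hk1, hk2,
      rfl, Multiset.cons_swap _ _ _⟩
  have m6 : ConfigMove (s(a, a + w) ::ₘ s(b + (w + x), b + (w + x) + (w + x)) ::ₘ rest)
      (s(a, a + w) ::ₘ s(b + (w + x), b + x + (w + x)) ::ₘ rest) := by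
    refine Or.inl ⟨a + w, a, b + (w + x), b + (w + x) + (w + x),
      b + x - a + (w + x), rest, A5, by abel, ?_, ?_⟩
    · rw [Sym2.eq_swap (a := a) (b := a + w)]
    · rw [show a + (b + x - a + (w + x)) = b + x + (w + x) from by abel,
        Sym2.eq_swap (a := a) (b := a + w)]
  have m7 : ConfigMove (s(a, a + w) ::ₘ s(b + (w + x), b + x + (w + x)) ::ₘ rest)
      (s(a, a + w) ::ₘ s(b + x, b + x + (w + x)) ::ₘ rest) := by
    refine Or.inl ⟨a + w, a, b + x + (w + x), b + (w + x), b + x - a, rest, A2,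
      by abel, ?_, ?_⟩
    · rw [Sym2.eq_swap (a := a) (b := a + w),
        Sym2.eq_swap (a := b + (w + x)) (b := b + x + (w + x))]
    · rw [show a + (b + x - a) = b + x from by abel,
        Sym2.eq_swap (a := a) (b := a + w),
        Sym2.eq_swap (a := b + x) (b := b + x + (w + x))]
  have m8 : ConfigMove (s(a, a + w) ::ₘ s(b + x, b + x + (w + x)) ::ₘ rest)
      (s(a, a + (w + x)) ::ₘ s(b + x, b + x + w) ::ₘ rest) := by
    obtain ⟨k1, hk1⟩ := exists_k a (b + x) w hw A2 S2
    obtain ⟨k2, hk2⟩ := exists_k a (b + x) (w + x) hwx A2 S4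
    exact Or.inr ⟨a, b + x, w, w + x, k1, k2, rest, hw, hwx, A2, hk1, hk2, rfl,
      Multiset.cons_swap _ _ _⟩
  have m9 : ConfigMove (s(a, a + (w + x)) ::ₘ s(b + x, b + x + w) ::ₘ rest)
      (s(a, a + (w + x)) ::ₘ s(b, b + x) ::ₘ rest) := by
    refine Or.inl ⟨a + (w + x), a, b + x, b + x + w, b - a, rest, A1,
      by abel, ?_, ?_⟩
    · rw [Sym2.eq_swap (a := a) (b := a + (w + x))]
    · rw [show a + (b - a) = b from by abel,
        Sym2.eq_swap (a := a) (b := a + (w + x)),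
        Sym2.eq_swap (a := b) (b := b + x)]
  exact Relation.ReflTransGen.head m1 (.head m2 (.head m3 (.head m4 (.head m5
    (.head m6 (.head m7 (.head m8 (.single m9))))))))
end

section
/- Let n ≥ 1 and let a1, …, an, b1, …, bn ∈ A⁺ satisfy supp(a_j) ⊆ supp(b1) ∪ … ∪ supp(b_{j−1}) for every j = 1, …, n (in particular supp(a1) = ∅). Let K be a natural number with K ≥ |(a_j)_i| and K ≥ |(b_j)_i| for all j = 1, …, n and all i ≥ 1, and let k1, …, kn be integers with k_j > K for all j. Define w1 := b1 − a1 and w_j := (b_j − a_j) + k_{j−1}·w_{j−1} for 2 ≤ j ≤ n. Then for every j = 1, …, n one has w_j ∈ A⁺ and supp(b1) ∪ … ∪ supp(b_j) ⊆ supp(w_j). -/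
/-- Lemma (positivity of the `w_j`): with `a_j, b_j ∈ A⁺` (indexed here by
`0, …, n−1`) such that `supp(a_j) ⊆ supp(b_0) ∪ … ∪ supp(b_{j−1})`, collapsing
constants `k_j > K` where `K` bounds all coordinates of the `a_j, b_j`, and
`w_0 = b_0 − a_0`, `w_j = (b_j − a_j) + k_{j−1} • w_{j−1}`, one has `w_j ∈ A⁺`
and `supp(b_0) ∪ … ∪ supp(b_j) ⊆ supp(w_j)` for every `j < n`. -/
theorem stmt_5 (n : ℕ) (hn : 1 ≤ n) (a b : ℕ → A)
    (hA : ∀ j < n, Apos (a j) ∧ Apos (b j))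
    (hsupp : ∀ j < n, suppA (a j) ⊆ (Finset.range j).biUnion fun i => suppA (b i))
    (K : ℕ)
    (hK : ∀ j < n, ∀ i : ℕ, ((a j).2 i).natAbs ≤ K ∧ ((b j).2 i).natAbs ≤ K)
    (k : ℕ → ℤ) (hk : ∀ j < n, (K : ℤ) < k j)
    (w : ℕ → A) (hw0 : w 0 = b 0 - a 0)
    (hwS : ∀ j, 0 < j → j < n → w j = (b j - a j) + k (j - 1) • w (j - 1)) :
    ∀ j < n, Apos (w j) ∧
      ((Finset.range (j + 1)).biUnion fun i => suppA (b i)) ⊆ suppA (w j) := by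
  intro j
  induction j with
  | zero =>
    intro hj
    have ha0 : (a 0).2 = 0 := by
      have h := hsupp 0 hj
      simp only [Finset.range_zero, Finset.biUnion_empty, Finset.subset_empty, suppA] at h
      exact Finsupp.support_eq_empty.mp h
    have hw : (w 0).2 = (b 0).2 := by
      rw [hw0]; simp [Prod.snd_sub, ha0]
    constructor
    · intro i
      rw [hw]
      exact (hA 0 hj).2 i
    · intro i hi
      simp only [Finset.mem_biUnion, Finset.mem_range, Nat.lt_one_iff] at hi
      obtain ⟨m, hm, hmi⟩ := hi
      have hm0 : m = 0 := by omega
      subst hm0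
      simpa [suppA, hw] using hmi
  | succ j ih =>
    intro hj
    have hjn : j < n := Nat.lt_of_succ_lt hj
    obtain ⟨ihp, ihs⟩ := ih hjn
    have hweq : w (j+1) = (b (j+1) - a (j+1)) + k j • w j := by
      simpa using hwS (j+1) (Nat.succ_pos j) hj
    have hval : ∀ i, (w (j+1)).2 i
        = (b (j+1)).2 i - (a (j+1)).2 i + k j * (w j).2 i := by
      intro i
      rw [hweq]
      simp [Prod.snd_add, Prod.snd_sub, Finsupp.add_apply, Finsupp.sub_apply,
        Finsupp.smul_apply, smul_eq_mul]
    have haK : ∀ i, ((a (j+1)).2 i) ≤ (K : ℤ) := by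
      intro i
      have h1 := (hK (j+1) hj i).1
      have h2 := (hA (j+1) hj).1 i
      omega
    have key : ∀ i, (i ∈ suppA (w j) ∨ i ∈ suppA (b (j+1)) → 0 < (w (j+1)).2 i)
        ∧ 0 ≤ (w (j+1)).2 i := by
      intro i
      by_cases hi : i ∈ suppA (w j)
      · have hne : (w j).2 i ≠ 0 := Finsupp.mem_support_iff.mp hi
        have hw1 : 1 ≤ (w j).2 i := by
          have := ihp i; omega
        have hkK : (K : ℤ) < k j := hk j hjn
        have hkpos : (0 : ℤ) < k j := lt_of_le_of_lt (Int.ofNat_nonneg K) hkK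
        have hb := (hA (j+1) hj).2 i
        have hkm : (k j : ℤ) ≤ k j * (w j).2 i :=
          le_mul_of_one_le_right hkpos.le hw1
        have hpos : 0 < (w (j+1)).2 i := by
          rw [hval i]
          have := haK i
          linarith
        exact ⟨fun _ => hpos, hpos.le⟩
      · have hwz : (w j).2 i = 0 := by
          by_contra h; exact hi (Finsupp.mem_support_iff.mpr h)
        have haz : (a (j+1)).2 i = 0 := by
          by_contra h
          have hmem : i ∈ suppA (a (j+1)) := Finsupp.mem_support_iff.mpr h
          exact hi (ihs (hsupp (j+1) hj hmem))
        have hv : (w (j+1)).2 i = (b (j+1)).2 i := by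
          rw [hval i, hwz, haz]; ring
        constructor
        · rintro (h | h)
          · exact absurd h hi
          · rw [hv]
            have hne : (b (j+1)).2 i ≠ 0 := Finsupp.mem_support_iff.mp h
            have := (hA (j+1) hj).2 i
            omega
        · rw [hv]; exact (hA (j+1) hj).2 i
    refine ⟨fun i => (key i).2, ?_⟩
    intro i hi
    simp only [Finset.mem_biUnion, Finset.mem_range] at hi
    obtain ⟨m, hm, hmi⟩ := hi
    have hpos : 0 < (w (j+1)).2 i := by
      rcases Nat.lt_succ_iff_lt_or_eq.mp hm with hm' | hm'
      · exact (key i).1 (Or.inl (ihs (Finset.mem_biUnion.mpr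
          ⟨m, Finset.mem_range.mpr hm', hmi⟩)))
      · exact (key i).1 (Or.inr (hm' ▸ hmi))
    exact Finsupp.mem_support_iff.mpr (by omega)
end

section
/- Let (Γ, ψ) be a GBS graph and let d, e ∈ E with d ∉ {e, ē}, τ(d) = ι(e), ψ(ē) = n, ψ(e) = m and ψ(d) = ℓ·n for some n, m, ℓ ∈ Z∖{0} (the vertices ι(d), τ(d), τ(e) need not be distinct). Let (Γ′, ψ′) be the GBS graph obtained from (Γ, ψ) by replacing the edge d by an edge d′ with ι(d′) = ι(d), τ(d′) = τ(e), ψ′(d̄′) = ψ(d̄) and ψ′(d′) = ℓ·m, leaving everything else unchanged (a slide move). Then the universal groups F(Γ, ψ) and F(Γ′, ψ′) are isomorphic; explicitly, the assignment fixing all vertex generators and all edge generators other than d′, d̄′ and sending d′ ↦ d·e extends to an isomorphism F(Γ′, ψ′) → F(Γ, ψ). -/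
/-- A GBS graph: a finite graph in the sense of Serre (vertex set `V`, edge set
`E`, fixed-point-free involution `bar`, initial-vertex map `ini`), together with
a labelling of the edges by nonzero integers. -/
structure GBSGraph (V E : Type) : Type where
  bar : E → E
  bar_ne : ∀ e, bar e ≠ e
  bar_invol : ∀ e, bar (bar e) = e
  ini : E → V
  label : E → ℤ
  label_ne : ∀ e, label e ≠ 0

namespace GBSGraph

variable {V E : Type}

/-- Terminal vertex of an edge. -/
def ter (G : GBSGraph V E) (e : E) : V := G.ini (G.bar e)

/-- The defining relators of the universal group `F(Γ, ψ)`: for every edge `e`,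
`ē·e = 1` and `ι(e)^{ψ(ē)}·e·(τ(e)^{ψ(e)})⁻¹·e⁻¹ = 1`. -/
def rels (G : GBSGraph V E) : Set (FreeGroup (V ⊕ E)) :=
  (Set.range fun e : E =>
    FreeGroup.of (Sum.inr (G.bar e)) * FreeGroup.of (Sum.inr e)) ∪
  (Set.range fun e : E =>
    FreeGroup.of (Sum.inl (G.ini e)) ^ G.label (G.bar e) * FreeGroup.of (Sum.inr e) *
      (FreeGroup.of (Sum.inl (G.ter e)) ^ G.label e)⁻¹ * (FreeGroup.of (Sum.inr e))⁻¹)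

end GBSGraph

namespace GBSGraph

variable {V E : Type}

lemma rel_mk (H : GBSGraph V E) {r : FreeGroup (V ⊕ E)} (hr : r ∈ H.rels) :
    PresentedGroup.mk H.rels r = 1 :=
  (QuotientGroup.eq_one_iff r).2 (Subgroup.subset_normalClosure hr)

lemma rel1 (H : GBSGraph V E) (f : E) :
    (PresentedGroup.of (Sum.inr (H.bar f)) : PresentedGroup H.rels) *
      PresentedGroup.of (Sum.inr f) = 1 := by
  have := rel_mk H (Or.inl ⟨f, rfl⟩)
  simpa [map_mul, PresentedGroup.of] using this

lemma of_bar (H : GBSGraph V E) (f : E) :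
    (PresentedGroup.of (Sum.inr (H.bar f)) : PresentedGroup H.rels) =
      (PresentedGroup.of (Sum.inr f))⁻¹ :=
  eq_inv_of_mul_eq_one_left (rel1 H f)

lemma rel2 (H : GBSGraph V E) (f : E) :
    (PresentedGroup.of (Sum.inl (H.ini f)) : PresentedGroup H.rels) ^ H.label (H.bar f) *
      PresentedGroup.of (Sum.inr f) =
    PresentedGroup.of (Sum.inr f) *
      (PresentedGroup.of (Sum.inl (H.ter f)) : PresentedGroup H.rels) ^ H.label f := by
  have h := rel_mk H (Or.inr ⟨f, rfl⟩)
  rw [map_mul, map_mul, map_mul, map_inv, map_inv, map_zpow] at h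
  have h1 := eq_of_mul_inv_eq_one h
  exact mul_inv_eq_iff_eq_mul.1 h1

end GBSGraph

section helpers
variable {A : Type*} [Group A]

lemma conj_rel {a b x : A} {n m : ℤ} (h : a ^ n * x = x * b ^ m) (ℓ : ℤ) :
    a ^ (ℓ * n) * x = x * b ^ (ℓ * m) := by
  have h' : b ^ m = x⁻¹ * a ^ n * x := by
    rw [mul_assoc, h]; group
  have h2 : b ^ (m * ℓ) = x⁻¹ * a ^ (n * ℓ) * x := by
    rw [zpow_mul, h', zpow_mul]
    have := conj_zpow (i := ℓ) (a := x⁻¹) (b := a ^ n)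
    simpa using this
  rw [mul_comm ℓ n, mul_comm ℓ m, h2]
  group

lemma swap_rel {a b x : A} (h : a * x = x * b) : b * x⁻¹ = x⁻¹ * a := by
  have : b = x⁻¹ * a * x := by rw [mul_assoc, h]; group
  rw [this]; group

lemma rel_form {a b x : A} (h : a * x = x * b) : a * x * b⁻¹ * x⁻¹ = 1 := by
  rw [h]; group

end helpers


/-- A slide move induces an isomorphism of universal groups: if `d ∉ {e, ē}`,
`τ(d) = ι(e)`, `ψ(ē) = n`, `ψ(e) = m`, `ψ(d) = ℓ·n`, and `(Γ', ψ')` is obtained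
by replacing `d` by `d'` with `ι(d') = ι(d)`, `τ(d') = τ(e)`, `ψ'(d̄') = ψ(d̄)`,
`ψ'(d') = ℓ·m` (here `d'` is identified with the edge index `d`), then the map
fixing all vertex generators and all edge generators other than `d', d̄'` and
sending `d' ↦ d·e` extends to an isomorphism `F(Γ', ψ') → F(Γ, ψ)`. -/
theorem stmt_7 {V E : Type} [Finite V] [Finite E]
    (G : GBSGraph V E) (d e : E)
    (hd1 : d ≠ e) (hd2 : d ≠ G.bar e)
    (hτι : G.ter d = G.ini e)
    (ℓ : ℤ) (hℓ : ℓ ≠ 0)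
    (hlabel : G.label d = ℓ * G.label (G.bar e))
    (G' : GBSGraph V E)
    (hbar : G'.bar = G.bar)
    (hini : ∀ f, f ≠ G.bar d → G'.ini f = G.ini f)
    (hinid : G'.ini (G.bar d) = G.ter e)
    (hlab : ∀ f, f ≠ d → G'.label f = G.label f)
    (hlabd : G'.label d = ℓ * G.label e) :
    ∃ φ : PresentedGroup G'.rels ≃* PresentedGroup G.rels,
      (∀ v : V, φ (PresentedGroup.of (Sum.inl v)) = PresentedGroup.of (Sum.inl v)) ∧
      (∀ f : E, f ≠ d → f ≠ G.bar d →
        φ (PresentedGroup.of (Sum.inr f)) = PresentedGroup.of (Sum.inr f)) ∧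
      φ (PresentedGroup.of (Sum.inr d)) =
        PresentedGroup.of (Sum.inr d) * PresentedGroup.of (Sum.inr e) := by
  classical
  -- basic combinatorial facts about edges
  have hdd : d ≠ G.bar d := (G.bar_ne d).symm
  have hbb : G.bar (G.bar d) = d := G.bar_invol d
  have hed : e ≠ d := Ne.symm hd1
  have hebd : e ≠ G.bar d := fun h => hd2 (by rw [h, G.bar_invol])
  have hbed : G.bar e ≠ d := Ne.symm hd2
  have hbebd : G.bar e ≠ G.bar d := fun h => hed (by rw [← G.bar_invol e, h, G.bar_invol])
  have barne1 : ∀ f : E, f ≠ G.bar d → G.bar f ≠ d := fun f hf h => hf (by rw [← G.bar_invol f, h])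
  have barne2 : ∀ f : E, f ≠ d → G.bar f ≠ G.bar d :=
    fun f hf h => hf (by rw [← G.bar_invol f, h, G.bar_invol])
  have hτι' : G.ini (G.bar d) = G.ini e := hτι
  -- the two generator maps
  let Φf : V ⊕ E → PresentedGroup G.rels := Sum.elim
    (fun v => PresentedGroup.of (Sum.inl v))
    (fun f => if f = d then PresentedGroup.of (Sum.inr d) * PresentedGroup.of (Sum.inr e)
      else if f = G.bar d then (PresentedGroup.of (Sum.inr d) * PresentedGroup.of (Sum.inr e))⁻¹
      else PresentedGroup.of (Sum.inr f))
  let Ψf : V ⊕ E → PresentedGroup G'.rels := Sum.elim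
    (fun v => PresentedGroup.of (Sum.inl v))
    (fun f => if f = d then PresentedGroup.of (Sum.inr d) * (PresentedGroup.of (Sum.inr e))⁻¹
      else if f = G.bar d then
        (PresentedGroup.of (Sum.inr d) * (PresentedGroup.of (Sum.inr e))⁻¹)⁻¹
      else PresentedGroup.of (Sum.inr f))
  -- key identity in PresentedGroup G.rels
  have keyA : (PresentedGroup.of (Sum.inl (G.ini d)) : PresentedGroup G.rels) ^
        G.label (G.bar d) *
        (PresentedGroup.of (Sum.inr d) * PresentedGroup.of (Sum.inr e)) =
      (PresentedGroup.of (Sum.inr d) * PresentedGroup.of (Sum.inr e)) *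
        PresentedGroup.of (Sum.inl (G.ini (G.bar e))) ^ (ℓ * G.label e) := by
    have h1 := G.rel2 d
    have h2 := G.rel2 e
    simp only [GBSGraph.ter] at h1 h2
    rw [hτι', hlabel] at h1
    have h3 := conj_rel h2 ℓ
    rw [← mul_assoc, h1, mul_assoc, h3, ← mul_assoc]
  -- key identity in PresentedGroup G'.rels
  have keyB : (PresentedGroup.of (Sum.inl (G.ini d)) : PresentedGroup G'.rels) ^
        G.label (G.bar d) *
        (PresentedGroup.of (Sum.inr d) * (PresentedGroup.of (Sum.inr e))⁻¹) =
      (PresentedGroup.of (Sum.inr d) * (PresentedGroup.of (Sum.inr e))⁻¹) *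
        PresentedGroup.of (Sum.inl (G.ini e)) ^ (ℓ * G.label (G.bar e)) := by
    have h1 := G'.rel2 d
    have h2 := G'.rel2 e
    simp only [GBSGraph.ter, hbar, hini d hdd, hini e hebd, hini _ hbebd,
      hlab _ (G.bar_ne d), hlab _ hbed, hlab e hed, hlabd, hinid] at h1 h2
    -- h1 : a_{ι d}^{ψ d̄} * Y_d = Y_d * a_{τ e}^{ℓ m}
    -- h2 : a_{ι e}^{n} * Y_e = Y_e * a_{τ e}^{m}
    have h3 := swap_rel (conj_rel h2 ℓ)
    rw [← mul_assoc, h1, mul_assoc, h3, ← mul_assoc]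
  -- the relations of G' are satisfied by Φf
  have hΦ : ∀ r ∈ G'.rels, FreeGroup.lift Φf r = 1 := by
    rintro r (⟨f, rfl⟩ | ⟨f, rfl⟩)
    · rw [map_mul, FreeGroup.lift_apply_of, FreeGroup.lift_apply_of, hbar]
      simp only [Φf, Sum.elim_inr]
      by_cases hfd : f = d
      · rw [hfd, if_neg (G.bar_ne d), if_pos rfl, if_pos rfl, inv_mul_cancel]
      · by_cases hfb : f = G.bar d
        · rw [hfb, hbb, if_pos rfl, if_neg (G.bar_ne d), if_pos rfl, mul_inv_cancel]
        · rw [if_neg (barne1 f hfb), if_neg (barne2 f hfd), if_neg hfd, if_neg hfb]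
          exact G.rel1 f
    · simp only [map_mul, map_inv, map_zpow, FreeGroup.lift_apply_of, Φf, Sum.elim_inl,
        Sum.elim_inr]
      by_cases hfd : f = d
      · rw [hfd, if_pos rfl, show G'.ini d = G.ini d from hini d hdd,
          show G'.label (G'.bar d) = G.label (G.bar d) from by
            rw [hbar]; exact hlab _ (G.bar_ne d),
          show G'.ter d = G.ini (G.bar e) from by
            show G'.ini (G'.bar d) = _; rw [hbar, hinid]; rfl,
          hlabd]
        exact rel_form keyA
      · by_cases hfb : f = G.bar d
        · rw [hfb, if_neg (G.bar_ne d), if_pos rfl,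
            show G'.ini (G.bar d) = G.ini (G.bar e) from by rw [hinid]; rfl,
            show G'.label (G'.bar (G.bar d)) = ℓ * G.label e from by rw [hbar, hbb, hlabd],
            show G'.ter (G.bar d) = G.ini d from by
              show G'.ini (G'.bar (G.bar d)) = _; rw [hbar, hbb]; exact hini d hdd,
            show G'.label (G.bar d) = G.label (G.bar d) from hlab _ (G.bar_ne d)]
          exact rel_form (swap_rel keyA)
        · rw [if_neg hfd, if_neg hfb, show G'.ini f = G.ini f from hini f hfb,
            show G'.label (G'.bar f) = G.label (G.bar f) from by
              rw [hbar]; exact hlab _ (barne1 f hfb),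
            show G'.ter f = G.ini (G.bar f) from by
              show G'.ini (G'.bar f) = _; rw [hbar]; exact hini _ (barne2 f hfd),
            hlab f hfd]
          have hh := G.rel2 f
          simp only [GBSGraph.ter] at hh
          exact rel_form hh
  -- the relations of G are satisfied by Ψf
  have hΨ : ∀ r ∈ G.rels, FreeGroup.lift Ψf r = 1 := by
    rintro r (⟨f, rfl⟩ | ⟨f, rfl⟩)
    · rw [map_mul, FreeGroup.lift_apply_of, FreeGroup.lift_apply_of]
      simp only [Ψf, Sum.elim_inr]
      by_cases hfd : f = d
      · rw [hfd, if_neg (G.bar_ne d), if_pos rfl, if_pos rfl, inv_mul_cancel]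
      · by_cases hfb : f = G.bar d
        · rw [hfb, hbb, if_pos rfl, if_neg (G.bar_ne d), if_pos rfl, mul_inv_cancel]
        · rw [if_neg (barne1 f hfb), if_neg (barne2 f hfd), if_neg hfd, if_neg hfb,
            ← hbar]
          exact G'.rel1 f
    · simp only [map_mul, map_inv, map_zpow, FreeGroup.lift_apply_of, Ψf, Sum.elim_inl,
        Sum.elim_inr, GBSGraph.ter]
      by_cases hfd : f = d
      · rw [hfd, if_pos rfl, hτι', hlabel]
        exact rel_form keyB
      · by_cases hfb : f = G.bar d
        · rw [hfb, hbb, if_neg (G.bar_ne d), if_pos rfl, hτι', hlabel]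
          exact rel_form (swap_rel keyB)
        · rw [if_neg hfd, if_neg hfb]
          have hh := G'.rel2 f
          simp only [GBSGraph.ter, hbar, hini f hfb, hini _ (barne2 f hfd),
            hlab f hfd, hlab _ (barne1 f hfb)] at hh
          exact rel_form hh
  -- the homomorphisms
  let Φ : PresentedGroup G'.rels →* PresentedGroup G.rels := PresentedGroup.toGroup hΦ
  let Ψ : PresentedGroup G.rels →* PresentedGroup G'.rels := PresentedGroup.toGroup hΨ
  have hofbarG : (PresentedGroup.of (Sum.inr (G.bar d)) : PresentedGroup G.rels) =
      (PresentedGroup.of (Sum.inr d))⁻¹ := G.of_bar d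
  have hofbarG' : (PresentedGroup.of (Sum.inr (G.bar d)) : PresentedGroup G'.rels) =
      (PresentedGroup.of (Sum.inr d))⁻¹ := by rw [← hbar]; exact G'.of_bar d
  have hΨΦ : Ψ.comp Φ = MonoidHom.id _ := by
    apply PresentedGroup.ext
    rintro (v | f)
    · simp [Φ, Ψ, Φf, Ψf, PresentedGroup.toGroup.of]
    · by_cases hfd : f = d
      · rw [hfd]
        simp [Φ, Ψ, Φf, Ψf, PresentedGroup.toGroup.of, hed, hebd]
      · by_cases hfb : f = G.bar d
        · rw [hfb]
          simp [Φ, Ψ, Φf, Ψf, PresentedGroup.toGroup.of, hed, hebd, G.bar_ne d, hdd,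
            hofbarG']
        · simp [Φ, Ψ, Φf, Ψf, PresentedGroup.toGroup.of, hfd, hfb]
  have hΦΨ : Φ.comp Ψ = MonoidHom.id _ := by
    apply PresentedGroup.ext
    rintro (v | f)
    · simp [Φ, Ψ, Φf, Ψf, PresentedGroup.toGroup.of]
    · by_cases hfd : f = d
      · rw [hfd]
        simp [Φ, Ψ, Φf, Ψf, PresentedGroup.toGroup.of, hed, hebd]
      · by_cases hfb : f = G.bar d
        · rw [hfb]
          simp [Φ, Ψ, Φf, Ψf, PresentedGroup.toGroup.of, hed, hebd, G.bar_ne d, hdd,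
            hofbarG]
        · simp [Φ, Ψ, Φf, Ψf, PresentedGroup.toGroup.of, hfd, hfb]
  refine ⟨MonoidHom.toMulEquiv Φ Ψ hΨΦ hΦΨ, ?_, ?_, ?_⟩
  · intro v
    simp [MonoidHom.toMulEquiv, Φ, Φf, PresentedGroup.toGroup.of]
  · intro f hf1 hf2
    simp [MonoidHom.toMulEquiv, Φ, Φf, PresentedGroup.toGroup.of, hf1, hf2]
  · simp [MonoidHom.toMulEquiv, Φ, Φf, PresentedGroup.toGroup.of]
end

section
/- Let (Γ, ψ) be a GBS graph and let d, e ∈ E with d ∉ {e, ē}, ι(d) = u, τ(d) = ι(e) = τ(e) = v (u = v is allowed), such that ψ(d̄) = m, ψ(d) = ℓ1·n, ψ(ē) = n, ψ(e) = ℓ·n for some m, n, ℓ1, ℓ ∈ Z∖{0}, and suppose ℓ1·ℓ2 = ℓ^k for some ℓ2 ∈ Z∖{0} and k ∈ N. Let (Γ′, ψ′) be the GBS graph obtained from (Γ, ψ) by replacing d, e by an edge d′ with ι(d′) = v, τ(d′) = u, ψ′(d̄′) = n, ψ′(d′) = ℓ2·m, and an edge e′ with ι(e′) = τ(e′) = u,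 ψ′(ē′) = m, ψ′(e′) = ℓ·m, leaving everything else unchanged (a connection move). Then the universal groups F(Γ, ψ) and F(Γ′, ψ′) are isomorphic; explicitly, the assignment fixing all generators other than d′, d̄′, e′, ē′ and sending d′ ↦ e^k·d^{−1} and e′ ↦ d·e·d^{−1} extends to an isomorphism F(Γ′, ψ′) → F(Γ, ψ). -/
section GroupLemmas

variable {H : Type*} [Group H]

theorem conj_zpow_mul_of_conj_zpow {g a b : H} {p q : ℤ} (h : g * a ^ p * g⁻¹ = b ^ q) (s : ℤ) :
    g * a ^ (p * s) * g⁻¹ = b ^ (q * s) := by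
  rw [zpow_mul, zpow_mul, ← h, conj_zpow]

theorem pow_conj_zpow_of_conj_zpow {g a : H} {ℓ n : ℤ} (h : g * a ^ (ℓ * n) * g⁻¹ = a ^ n)
    (j : ℕ) : g ^ j * a ^ (ℓ ^ j * n) * (g ^ j)⁻¹ = a ^ n := by
  induction j with
  | zero => simp
  | succ j ih =>
    calc g ^ (j + 1) * a ^ (ℓ ^ (j + 1) * n) * (g ^ (j + 1))⁻¹
        = g ^ j * (g * a ^ (ℓ * n * ℓ ^ j) * g⁻¹) * (g ^ j)⁻¹ := by
          rw [show ℓ ^ (j + 1) * n = ℓ * n * ℓ ^ j by ring, pow_succ]; group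
      _ = a ^ n := by
          rw [conj_zpow_mul_of_conj_zpow h, mul_comm n]; exact ih

variable {D E U W : H} {m n ℓ₁ ℓ₂ ℓ : ℤ}

theorem conj_zpow_connection_d (hD : D * W ^ (ℓ₁ * n) * D⁻¹ = U ^ m)
    (hE : E * W ^ (ℓ * n) * E⁻¹ = W ^ n) {k : ℕ} (hk : ℓ₁ * ℓ₂ = ℓ ^ k) :
    (E ^ k * D⁻¹) * U ^ (ℓ₂ * m) * (E ^ k * D⁻¹)⁻¹ = W ^ n := by
  have hD' : D * W ^ (ℓ ^ k * n) * D⁻¹ = U ^ (ℓ₂ * m) := by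
    rw [← hk, show ℓ₁ * ℓ₂ * n = ℓ₁ * n * ℓ₂ by ring, conj_zpow_mul_of_conj_zpow hD, mul_comm]
  calc (E ^ k * D⁻¹) * U ^ (ℓ₂ * m) * (E ^ k * D⁻¹)⁻¹
      = E ^ k * W ^ (ℓ ^ k * n) * (E ^ k)⁻¹ := by rw [← hD']; group
    _ = W ^ n := pow_conj_zpow_of_conj_zpow hE k

theorem conj_zpow_connection_e (hD : D * W ^ (ℓ₁ * n) * D⁻¹ = U ^ m)
    (hE : E * W ^ (ℓ * n) * E⁻¹ = W ^ n) :
    (D * E * D⁻¹) * U ^ (ℓ * m) * (D * E * D⁻¹)⁻¹ = U ^ m := by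
  have hDℓ : D * W ^ (ℓ₁ * n * ℓ) * D⁻¹ = U ^ (ℓ * m) := by
    rw [conj_zpow_mul_of_conj_zpow hD, mul_comm]
  calc (D * E * D⁻¹) * U ^ (ℓ * m) * (D * E * D⁻¹)⁻¹
      = D * (E * W ^ (ℓ * n * ℓ₁) * E⁻¹) * D⁻¹ := by
        rw [← hDℓ, show ℓ * n * ℓ₁ = ℓ₁ * n * ℓ by ring]; group
    _ = U ^ m := by rw [conj_zpow_mul_of_conj_zpow hE, mul_comm n, hD]

end GroupLemmas

namespace GBSGraph

variable {V E : Type} (G : GBSGraph V E)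

theorem bar_involutive : Function.Involutive G.bar := G.bar_invol

theorem ter_bar (f : E) : G.ter (G.bar f) = G.ini f := by
  rw [ter, G.bar_invol]

theorem ini_bar (f : E) : G.ini (G.bar f) = G.ter f := rfl

section EdgeRel

variable {H : Type*} [Group H]

def EdgeRel (x : V ⊕ E → H) (f : E) : Prop :=
  x (.inr f) * x (.inl (G.ter f)) ^ G.label f * (x (.inr f))⁻¹ =
    x (.inl (G.ini f)) ^ G.label (G.bar f)

theorem lift_rels_eq_one (x : V ⊕ E → H) (hbar : ∀ f, x (.inr (G.bar f)) = (x (.inr f))⁻¹)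
    (hrel : ∀ f, G.EdgeRel x f) : ∀ r ∈ G.rels, FreeGroup.lift x r = 1 := by
  rintro r (⟨f, rfl⟩ | ⟨f, rfl⟩)
  · simp only [map_mul, FreeGroup.lift_apply_of, hbar, inv_mul_cancel]
  · simp only [map_mul, map_inv, map_zpow, FreeGroup.lift_apply_of]
    rw [← hrel f]
    group

theorem edgeRel_bar {x : V ⊕ E → H} {f : E} (hbar : x (.inr (G.bar f)) = (x (.inr f))⁻¹)
    (h : G.EdgeRel x f) : G.EdgeRel x (G.bar f) := by
  rw [EdgeRel, ter_bar, ini_bar, G.bar_invol, hbar, ← h]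
  group

end EdgeRel

theorem of_bar_s10 (f : E) :
    (PresentedGroup.of (.inr (G.bar f)) : PresentedGroup G.rels) =
      (PresentedGroup.of (.inr f))⁻¹ := by
  refine eq_inv_of_mul_eq_one_left ?_
  have h := PresentedGroup.one_of_mem (rels := G.rels) (.inl ⟨f, rfl⟩)
  rw [map_mul] at h
  exact h

theorem edgeRel_of (f : E) : G.EdgeRel (PresentedGroup.of (rels := G.rels)) f := by
  set a : PresentedGroup G.rels := .of (.inl (G.ini f)) ^ G.label (G.bar f)
  set b : PresentedGroup G.rels := .of (.inl (G.ter f)) ^ G.label f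
  set x : PresentedGroup G.rels := .of (.inr f)
  have hrel : a * x * b⁻¹ * x⁻¹ = 1 := by
    have h := PresentedGroup.one_of_mem (rels := G.rels) (.inr ⟨f, rfl⟩)
    rw [map_mul, map_mul, map_mul, map_inv, map_inv, map_zpow, map_zpow] at h
    exact h
  calc x * b * x⁻¹ = (a * x * b⁻¹ * x⁻¹)⁻¹ * a := by group
    _ = a := by rw [hrel, inv_one, one_mul]

theorem presentedGroup_hom_ext {H : Type*} [Group H] {φ ψ : PresentedGroup G.rels →* H}
    (d e : E) (hv : ∀ w, φ (.of (.inl w)) = ψ (.of (.inl w)))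
    (hd : φ (.of (.inr d)) = ψ (.of (.inr d))) (he : φ (.of (.inr e)) = ψ (.of (.inr e)))
    (ho : ∀ f, f ≠ d → f ≠ G.bar d → f ≠ e → f ≠ G.bar e →
      φ (.of (.inr f)) = ψ (.of (.inr f))) : φ = ψ := by
  refine PresentedGroup.ext ?_
  rintro (w | f)
  · exact hv w
  by_cases hfd : f = d
  · rw [hfd, hd]
  by_cases hfbd : f = G.bar d
  · rw [hfbd, of_bar_s10, map_inv, map_inv, hd]
  by_cases hfe : f = e
  · rw [hfe, he]
  by_cases hfbe : f = G.bar e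
  · rw [hfbe, of_bar_s10, map_inv, map_inv, he]
  exact ho f hfd hfbd hfe hfbe

noncomputable def connectionGen (d e : E) (k : ℕ) : V ⊕ E → PresentedGroup G.rels :=
  open Classical in
  let D : PresentedGroup G.rels := .of (.inr d)
  let Eg : PresentedGroup G.rels := .of (.inr e)
  Sum.elim (fun w => .of (.inl w)) fun f =>
    if f = d then Eg ^ k * D⁻¹
    else if f = G.bar d then (Eg ^ k * D⁻¹)⁻¹
    else if f = e then D * Eg * D⁻¹
    else if f = G.bar e then (D * Eg * D⁻¹)⁻¹
    else .of (.inr f)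

section connectionGen

variable {d e : E} (k : ℕ)

theorem connectionGen_inl (w : V) : G.connectionGen d e k (.inl w) = .of (.inl w) := rfl

theorem connectionGen_d :
    G.connectionGen d e k (.inr d) = .of (.inr e) ^ k * (.of (.inr d))⁻¹ := by
  simp only [connectionGen, Sum.elim_inr, ↓reduceIte]

theorem connectionGen_bar_d :
    G.connectionGen d e k (.inr (G.bar d)) = (.of (.inr e) ^ k * (.of (.inr d))⁻¹)⁻¹ := by
  simp only [connectionGen, Sum.elim_inr, if_neg (G.bar_ne d), ↓reduceIte]

theorem connectionGen_e (h1 : d ≠ e) (h2 : d ≠ G.bar e) :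
    G.connectionGen d e k (.inr e) = .of (.inr d) * .of (.inr e) * (.of (.inr d))⁻¹ := by
  simp only [connectionGen, Sum.elim_inr, if_neg h1.symm,
    if_neg (mt G.bar_involutive.eq_iff.mpr (Ne.symm h2)), ↓reduceIte]

theorem connectionGen_bar_e (h1 : d ≠ e) (h2 : d ≠ G.bar e) :
    G.connectionGen d e k (.inr (G.bar e)) =
      (.of (.inr d) * .of (.inr e) * (.of (.inr d))⁻¹)⁻¹ := by
  simp only [connectionGen, Sum.elim_inr, if_neg (Ne.symm h2),
    if_neg (G.bar_involutive.injective.ne h1.symm), if_neg (G.bar_ne e), ↓reduceIte]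

theorem connectionGen_of_ne {f : E} (hd : f ≠ d) (hbd : f ≠ G.bar d) (he : f ≠ e)
    (hbe : f ≠ G.bar e) : G.connectionGen d e k (.inr f) = .of (.inr f) := by
  simp only [connectionGen, Sum.elim_inr, if_neg hd, if_neg hbd, if_neg he, if_neg hbe]

theorem connectionGen_bar (h1 : d ≠ e) (h2 : d ≠ G.bar e) (f : E) :
    G.connectionGen d e k (.inr (G.bar f)) = (G.connectionGen d e k (.inr f))⁻¹ := by
  by_cases hfd : f = d
  · rw [hfd, connectionGen_bar_d, connectionGen_d]
  by_cases hfbd : f = G.bar d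
  · rw [hfbd, G.bar_invol, connectionGen_bar_d, connectionGen_d, inv_inv]
  by_cases hfe : f = e
  · rw [hfe, connectionGen_bar_e G k h1 h2, connectionGen_e G k h1 h2]
  by_cases hfbe : f = G.bar e
  · rw [hfbe, G.bar_invol, connectionGen_bar_e G k h1 h2, connectionGen_e G k h1 h2, inv_inv]
  have hinj := G.bar_involutive.injective
  rw [connectionGen_of_ne G k hfd hfbd hfe hfbe, connectionGen_of_ne G k
    (mt G.bar_involutive.eq_iff.mp hfbd) (hinj.ne hfd) (mt G.bar_involutive.eq_iff.mp hfbe)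
    (hinj.ne hfe), of_bar_s10]

end connectionGen

/-- The new edges `d', e'` of `G'` carry the names `d, e`. -/
structure IsConnectionMove (G G' : GBSGraph V E) (u v : V) (d e : E) (m n ℓ₁ ℓ₂ ℓ : ℤ)
    (k : ℕ) : Prop where
  ne : d ≠ e
  ne_bar : d ≠ G.bar e
  ini_d : G.ini d = u
  ter_d : G.ter d = v
  ini_e : G.ini e = v
  ter_e : G.ter e = v
  label_bar_d : G.label (G.bar d) = m
  label_d : G.label d = ℓ₁ * n
  label_bar_e : G.label (G.bar e) = n
  label_e : G.label e = ℓ * n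
  mul_eq_pow : ℓ₁ * ℓ₂ = ℓ ^ k
  bar_eq : G'.bar = G.bar
  ini_d' : G'.ini d = v
  ini_bar_d' : G'.ini (G.bar d) = u
  ini_e' : G'.ini e = u
  ini_bar_e' : G'.ini (G.bar e) = u
  ini_of_ne : ∀ f, f ≠ d → f ≠ G.bar d → f ≠ e → f ≠ G.bar e → G'.ini f = G.ini f
  label_bar_d' : G'.label (G.bar d) = n
  label_d' : G'.label d = ℓ₂ * m
  label_bar_e' : G'.label (G.bar e) = m
  label_e' : G'.label e = ℓ * m
  label_of_ne : ∀ f, f ≠ d → f ≠ G.bar d → f ≠ e → f ≠ G.bar e → G'.label f = G.label f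

namespace IsConnectionMove

variable {G} {G' : GBSGraph V E} {u v : V} {d e : E} {m n ℓ₁ ℓ₂ ℓ : ℤ} {k : ℕ}
  (h : IsConnectionMove G G' u v d e m n ℓ₁ ℓ₂ ℓ k)
include h

theorem symm : IsConnectionMove G' G v u d e n m ℓ₂ ℓ₁ ℓ k := by
  obtain ⟨h1, h2, hιd, hτd, hιe, hτe, hl1, hl2, hl3, hl4, hk, hbar, hι1, hι2, hι3, hι4, hι5,
    hl1', hl2', hl3', hl4', hlab⟩ := h
  refine ⟨h1, hbar ▸ h2, hι1, by rwa [ter, hbar], hι3, by rwa [ter, hbar], hbar ▸ hl1', hl2',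
    hbar ▸ hl3', hl4', by rw [mul_comm, hk], hbar.symm, hιd, hbar ▸ hτd, hιe, hbar ▸ hτe,
    fun f hd hbd he hbe ↦ (hι5 f hd (hbar ▸ hbd) he (hbar ▸ hbe)).symm, hbar ▸ hl1, hl2,
    hbar ▸ hl3, hl4, fun f hd hbd he hbe ↦ (hlab f hd (hbar ▸ hbd) he (hbar ▸ hbe)).symm⟩

theorem edgeRel_connectionGen_of_ne {f : E} (hd : f ≠ d) (hbd : f ≠ G.bar d) (he : f ≠ e)
    (hbe : f ≠ G.bar e) : G'.EdgeRel (G.connectionGen d e k) f := by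
  have hinj := G.bar_involutive.injective
  have hd' : G.bar f ≠ d := mt G.bar_involutive.eq_iff.mp hbd
  have he' : G.bar f ≠ e := mt G.bar_involutive.eq_iff.mp hbe
  rw [EdgeRel, ter, h.bar_eq, connectionGen_of_ne G k hd hbd he hbe, connectionGen_inl,
    connectionGen_inl, h.ini_of_ne f hd hbd he hbe, h.ini_of_ne _ hd' (hinj.ne hd) he' (hinj.ne he),
    h.label_of_ne f hd hbd he hbe, h.label_of_ne _ hd' (hinj.ne hd) he' (hinj.ne he)]
  exact G.edgeRel_of f

theorem lift_rels_eq_one : ∀ r ∈ G'.rels, FreeGroup.lift (G.connectionGen d e k) r = 1 := by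
  have hbar : ∀ f, G.connectionGen d e k (.inr (G'.bar f)) =
      (G.connectionGen d e k (.inr f))⁻¹ :=
    h.bar_eq ▸ G.connectionGen_bar k h.ne h.ne_bar
  have hD := G.edgeRel_of d
  have hE := G.edgeRel_of e
  rw [EdgeRel, h.ini_d, h.ter_d, h.label_bar_d, h.label_d] at hD
  rw [EdgeRel, h.ini_e, h.ter_e, h.label_bar_e, h.label_e] at hE
  have hrel_d : G'.EdgeRel (G.connectionGen d e k) d := by
    rw [EdgeRel, ter, h.bar_eq, h.ini_d', h.ini_bar_d', h.label_d', h.label_bar_d',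
      connectionGen_d]
    exact conj_zpow_connection_d hD hE h.mul_eq_pow
  have hrel_e : G'.EdgeRel (G.connectionGen d e k) e := by
    rw [EdgeRel, ter, h.bar_eq, h.ini_e', h.ini_bar_e', h.label_e', h.label_bar_e',
      connectionGen_e G k h.ne h.ne_bar]
    exact conj_zpow_connection_e hD hE
  refine G'.lift_rels_eq_one _ hbar fun f ↦ ?_
  by_cases hfd : f = d
  · exact hfd ▸ hrel_d
  by_cases hfbd : f = G.bar d
  · exact hfbd ▸ h.bar_eq ▸ G'.edgeRel_bar (hbar d) hrel_d
  by_cases hfe : f = e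
  · exact hfe ▸ hrel_e
  by_cases hfbe : f = G.bar e
  · exact hfbe ▸ h.bar_eq ▸ G'.edgeRel_bar (hbar e) hrel_e
  exact h.edgeRel_connectionGen_of_ne hfd hfbd hfe hfbe

noncomputable def hom : PresentedGroup G'.rels →* PresentedGroup G.rels :=
  PresentedGroup.toGroup h.lift_rels_eq_one

theorem hom_of_inl (w : V) : h.hom (.of (.inl w)) = .of (.inl w) :=
  PresentedGroup.toGroup.of _

theorem hom_of_d : h.hom (.of (.inr d)) = .of (.inr e) ^ k * (.of (.inr d))⁻¹ :=
  (PresentedGroup.toGroup.of _).trans (G.connectionGen_d k)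

theorem hom_of_e : h.hom (.of (.inr e)) = .of (.inr d) * .of (.inr e) * (.of (.inr d))⁻¹ :=
  (PresentedGroup.toGroup.of _).trans (G.connectionGen_e k h.ne h.ne_bar)

theorem hom_of_ne (f : E) (hd : f ≠ d) (hbd : f ≠ G.bar d) (he : f ≠ e) (hbe : f ≠ G.bar e) :
    h.hom (.of (.inr f)) = .of (.inr f) :=
  (PresentedGroup.toGroup.of _).trans (G.connectionGen_of_ne k hd hbd he hbe)

theorem hom_comp_symm_hom : h.hom.comp h.symm.hom = MonoidHom.id _ := by
  refine G.presentedGroup_hom_ext d e (fun w ↦ ?_) ?_ ?_ fun f hd hbd he hbe ↦ ?_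
  · rw [MonoidHom.comp_apply, h.symm.hom_of_inl, h.hom_of_inl, MonoidHom.id_apply]
  · rw [MonoidHom.comp_apply, h.symm.hom_of_d, map_mul, map_pow, map_inv, h.hom_of_d,
      h.hom_of_e, conj_pow, MonoidHom.id_apply]
    group
  · rw [MonoidHom.comp_apply, h.symm.hom_of_e, map_mul, map_mul, map_inv, h.hom_of_d,
      h.hom_of_e, MonoidHom.id_apply]
    group
  · rw [MonoidHom.comp_apply, h.symm.hom_of_ne f hd (h.bar_eq ▸ hbd) he (h.bar_eq ▸ hbe),
      h.hom_of_ne f hd hbd he hbe, MonoidHom.id_apply]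

/-- `h.symm.symm` is `h` by proof irrelevance, so `h.symm.hom_comp_symm_hom` is the other
inverse identity. -/
noncomputable def mulEquiv : PresentedGroup G'.rels ≃* PresentedGroup G.rels :=
  MonoidHom.toMulEquiv h.hom h.symm.hom h.symm.hom_comp_symm_hom h.hom_comp_symm_hom

end IsConnectionMove

end GBSGraph

theorem stmt_10_general {V E : Type}
    (G : GBSGraph V E) (u v : V) (d e : E)
    (h1 : d ≠ e) (h2 : d ≠ G.bar e)
    (hιd : G.ini d = u) (hτd : G.ter d = v) (hιe : G.ini e = v) (hτe : G.ter e = v)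
    (m n ℓ₁ ℓ₂ ℓ : ℤ)
    (hl1 : G.label (G.bar d) = m) (hl2 : G.label d = ℓ₁ * n)
    (hl3 : G.label (G.bar e) = n) (hl4 : G.label e = ℓ * n)
    (k : ℕ) (hk : ℓ₁ * ℓ₂ = ℓ ^ k)
    (G' : GBSGraph V E)
    (hbar : G'.bar = G.bar)
    (hι1 : G'.ini d = v) (hι2 : G'.ini (G.bar d) = u)
    (hι3 : G'.ini e = u) (hι4 : G'.ini (G.bar e) = u)
    (hι5 : ∀ f, f ≠ d → f ≠ G.bar d → f ≠ e → f ≠ G.bar e → G'.ini f = G.ini f)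
    (hl1' : G'.label (G.bar d) = n) (hl2' : G'.label d = ℓ₂ * m)
    (hl3' : G'.label (G.bar e) = m) (hl4' : G'.label e = ℓ * m)
    (hlab : ∀ f, f ≠ d → f ≠ G.bar d → f ≠ e → f ≠ G.bar e →
      G'.label f = G.label f) :
    ∃ φ : PresentedGroup G'.rels ≃* PresentedGroup G.rels,
      (∀ w : V, φ (PresentedGroup.of (Sum.inl w)) = PresentedGroup.of (Sum.inl w)) ∧
      (∀ f : E, f ≠ d → f ≠ G.bar d → f ≠ e → f ≠ G.bar e →
        φ (PresentedGroup.of (Sum.inr f)) = PresentedGroup.of (Sum.inr f)) ∧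
      φ (PresentedGroup.of (Sum.inr d)) =
        PresentedGroup.of (Sum.inr e) ^ k * (PresentedGroup.of (Sum.inr d))⁻¹ ∧
      φ (PresentedGroup.of (Sum.inr e)) =
        PresentedGroup.of (Sum.inr d) * PresentedGroup.of (Sum.inr e) *
          (PresentedGroup.of (Sum.inr d))⁻¹ := by
  have h : GBSGraph.IsConnectionMove G G' u v d e m n ℓ₁ ℓ₂ ℓ k :=
    ⟨h1, h2, hιd, hτd, hιe, hτe, hl1, hl2, hl3, hl4, hk, hbar, hι1, hι2, hι3, hι4, hι5,
      hl1', hl2', hl3', hl4', hlab⟩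
  exact ⟨h.mulEquiv, h.hom_of_inl, h.hom_of_ne, h.hom_of_d, h.hom_of_e⟩

/-- A connection move induces an isomorphism of universal groups: if `d ∉ {e, ē}`,
`ι(d) = u`, `τ(d) = ι(e) = τ(e) = v` (`u = v` allowed), `ψ(d̄) = m`, `ψ(d) = ℓ₁·n`,
`ψ(ē) = n`, `ψ(e) = ℓ·n`, `ℓ₁·ℓ₂ = ℓ^k`, and `(Γ', ψ')` is obtained by replacing
`d, e` by an edge `d'` from `v` to `u` with `ψ'(d̄') = n`, `ψ'(d') = ℓ₂·m` and a
loop `e'` at `u` with `ψ'(ē') = m`, `ψ'(e') = ℓ·m` (identifying `d'` with `d` and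
`e'` with `e`), then the map fixing all generators other than `d', d̄', e', ē'`
and sending `d' ↦ e^k·d⁻¹`, `e' ↦ d·e·d⁻¹` extends to an isomorphism
`F(Γ', ψ') → F(Γ, ψ)`. -/
theorem stmt_10 {V E : Type} [Finite V] [Finite E]
    (G : GBSGraph V E) (u v : V) (d e : E)
    (h1 : d ≠ e) (h2 : d ≠ G.bar e)
    (hιd : G.ini d = u) (hτd : G.ter d = v) (hιe : G.ini e = v) (hτe : G.ter e = v)
    (m n ℓ₁ ℓ₂ ℓ : ℤ)
    (hm : m ≠ 0) (hn : n ≠ 0) (hℓ₁ : ℓ₁ ≠ 0) (hℓ₂ : ℓ₂ ≠ 0) (hℓ : ℓ ≠ 0)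
    (hl1 : G.label (G.bar d) = m) (hl2 : G.label d = ℓ₁ * n)
    (hl3 : G.label (G.bar e) = n) (hl4 : G.label e = ℓ * n)
    (k : ℕ) (hk : ℓ₁ * ℓ₂ = ℓ ^ k)
    (G' : GBSGraph V E)
    (hbar : G'.bar = G.bar)
    (hι1 : G'.ini d = v) (hι2 : G'.ini (G.bar d) = u)
    (hι3 : G'.ini e = u) (hι4 : G'.ini (G.bar e) = u)
    (hι5 : ∀ f, f ≠ d → f ≠ G.bar d → f ≠ e → f ≠ G.bar e → G'.ini f = G.ini f)
    (hl1' : G'.label (G.bar d) = n) (hl2' : G'.label d = ℓ₂ * m)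
    (hl3' : G'.label (G.bar e) = m) (hl4' : G'.label e = ℓ * m)
    (hlab : ∀ f, f ≠ d → f ≠ G.bar d → f ≠ e → f ≠ G.bar e →
      G'.label f = G.label f) :
    ∃ φ : PresentedGroup G'.rels ≃* PresentedGroup G.rels,
      (∀ w : V, φ (PresentedGroup.of (Sum.inl w)) = PresentedGroup.of (Sum.inl w)) ∧
      (∀ f : E, f ≠ d → f ≠ G.bar d → f ≠ e → f ≠ G.bar e →
        φ (PresentedGroup.of (Sum.inr f)) = PresentedGroup.of (Sum.inr f)) ∧
      φ (PresentedGroup.of (Sum.inr d)) =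
        PresentedGroup.of (Sum.inr e) ^ k * (PresentedGroup.of (Sum.inr d))⁻¹ ∧
      φ (PresentedGroup.of (Sum.inr e)) =
        PresentedGroup.of (Sum.inr d) * PresentedGroup.of (Sum.inr e) *
          (PresentedGroup.of (Sum.inr d))⁻¹ :=
  stmt_10_general G u v d e h1 h2 hιd hτd hιe hτe m n ℓ₁ ℓ₂ ℓ hl1 hl2 hl3 hl4 k hk G' hbar hι1 hι2
    hι3 hι4 hι5 hl1' hl2' hl3' hl4' hlab
end

section
/- If a group G has unique roots, then: (1) G is torsion-free, i.e. every element g ≠ 1 has infinite order; and (2) for every g ∈ G with g ≠ 1 and all integers i, j, if g^i is conjugate to g^j in G, then i = j. -/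
/-!
A root has infinite order, since an element of order `n` is its own `(n + 1)`-st power; so every
`g ≠ 1`, being a positive power of a root, has infinite order, and uniqueness of roots makes
`n`-th roots unique. If `g = r ^ k` with `r` a root and `x` conjugates `g ^ i` to `g ^ j`, then
`x * r * x⁻¹` and `r` or `r⁻¹` are roots of one element, so `x * r * x⁻¹ = r ^ (±1)`. The sign `-`
would give `(x * r) ^ 2 = x ^ 2`, hence `r = 1`; the sign `+` gives `r ^ (k * i) = r ^ (k * j)`.
-/

def IsRoot {G : Type*} [Group G] (r : G) : Prop :=
  ¬ ∃ (s : G) (k : ℕ), 2 ≤ k ∧ r = s ^ k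

def HasUniqueRoots (G : Type*) [Group G] : Prop :=
  ∀ g : G, g ≠ 1 → ∃! r : G, IsRoot r ∧ ∃ k : ℕ, 1 ≤ k ∧ g = r ^ k

namespace IsRoot

variable {G : Type*} [Group G] {r : G}

theorem ne_one (hr : IsRoot r) : r ≠ 1 := by
  rintro rfl
  exact hr ⟨1, 2, le_rfl, (one_pow 2).symm⟩

theorem not_isOfFinOrder (hr : IsRoot r) : ¬ IsOfFinOrder r := fun hfin =>
  hr ⟨r, orderOf r + 1, by have := hfin.orderOf_pos; omega,
    by rw [pow_succ, pow_orderOf_eq_one, one_mul]⟩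

theorem pow_ne_one (hr : IsRoot r) {n : ℕ} (hn : n ≠ 0) : r ^ n ≠ 1 := fun h =>
  hr.not_isOfFinOrder ((h ▸ IsOfFinOrder.one).of_pow hn)

theorem inv (hr : IsRoot r) : IsRoot r⁻¹ := by
  rintro ⟨s, k, hk, hs⟩
  exact hr ⟨s⁻¹, k, hk, by rw [inv_pow, ← hs, inv_inv]⟩

theorem map {H : Type*} [Group H] (e : G ≃* H) (hr : IsRoot r) : IsRoot (e r) := by
  rintro ⟨s, k, hk, hs⟩
  exact hr ⟨e.symm s, k, hk, by rw [← map_pow, ← hs, e.symm_apply_apply]⟩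

theorem conj (hr : IsRoot r) (x : G) : IsRoot (x * r * x⁻¹) :=
  hr.map (MulAut.conj x)

end IsRoot

namespace HasUniqueRoots

variable {G : Type*} [Group G]

theorem not_isOfFinOrder (h : HasUniqueRoots G) {g : G} (hg : g ≠ 1) : ¬ IsOfFinOrder g := by
  obtain ⟨r, ⟨hr, k, hk, rfl⟩, -⟩ := h g hg
  exact fun hfin => hr.not_isOfFinOrder (hfin.of_pow (by omega))

theorem root_eq_of_pow_eq_pow (h : HasUniqueRoots G) {r s : G} (hr : IsRoot r) (hs : IsRoot s)
    {m n : ℕ} (hm : m ≠ 0) (hrs : r ^ m = s ^ n) : r = s := by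
  have hn : n ≠ 0 := by
    rintro rfl
    exact hr.pow_ne_one hm (hrs.trans (pow_zero s))
  exact (h _ (hr.pow_ne_one hm)).unique ⟨hr, m, by omega, rfl⟩ ⟨hs, n, by omega, hrs⟩

theorem eq_one_of_pow_eq_one (h : HasUniqueRoots G) {a : G} {n : ℕ} (hn : n ≠ 0)
    (ha : a ^ n = 1) : a = 1 :=
  by_contra fun ha₁ => h.not_isOfFinOrder ha₁ ((ha ▸ IsOfFinOrder.one).of_pow hn)

theorem isMulTorsionFree (h : HasUniqueRoots G) : IsMulTorsionFree G := by
  refine ⟨fun n hn a b (hab : a ^ n = b ^ n) => ?_⟩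
  rcases eq_or_ne a 1 with rfl | ha
  · exact (h.eq_one_of_pow_eq_one hn ((one_pow n).symm.trans hab).symm).symm
  rcases eq_or_ne b 1 with rfl | hb
  · exact h.eq_one_of_pow_eq_one hn (hab.trans (one_pow n))
  obtain ⟨r, ⟨hr, p, hp, rfl⟩, -⟩ := h a ha
  obtain ⟨s, ⟨hs, q, hq, rfl⟩, -⟩ := h b hb
  rw [← pow_mul, ← pow_mul] at hab
  obtain rfl := h.root_eq_of_pow_eq_pow hr hs (Nat.mul_ne_zero (by omega) hn) hab
  have hpq : p * n = q * n := injective_pow_iff_not_isOfFinOrder.mpr hr.not_isOfFinOrder hab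
  rw [Nat.eq_of_mul_eq_mul_right (Nat.pos_of_ne_zero hn) hpq]

theorem eq_one_of_conj_eq_inv (h : HasUniqueRoots G) {r x : G} (hx : x * r * x⁻¹ = r⁻¹) :
    r = 1 := by
  have hrxr : r * x * r = x := by
    rw [mul_assoc, mul_inv_eq_iff_eq_mul.mp hx, mul_inv_cancel_left]
  have hsq : (x * r) ^ 2 = x ^ 2 :=
    calc (x * r) ^ 2 = x * (r * x * r) := by simp only [sq, mul_assoc]
      _ = x ^ 2 := by rw [hrxr, sq]
  exact mul_eq_left.mp (h.isMulTorsionFree.pow_left_injective two_ne_zero hsq)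

theorem root_eq_or_eq_inv_of_zpow_eq (h : HasUniqueRoots G) {r s : G} (hr : IsRoot r)
    (hs : IsRoot s) {a b : ℤ} (ha : a ≠ 0) (hrs : r ^ a = s ^ b) : r = s ∨ r = s⁻¹ := by
  obtain ⟨m, rfl | rfl⟩ := Int.eq_nat_or_neg a <;> obtain ⟨n, rfl | rfl⟩ := Int.eq_nat_or_neg b <;>
    simp only [zpow_neg, zpow_natCast, ← inv_pow] at hrs <;> have hm : m ≠ 0 := by omega
  · exact .inl (h.root_eq_of_pow_eq_pow hr hs hm hrs)
  · exact .inr (h.root_eq_of_pow_eq_pow hr hs.inv hm hrs)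
  · exact .inr (inv_eq_iff_eq_inv.mp (h.root_eq_of_pow_eq_pow hr.inv hs hm hrs))
  · exact .inl (inv_injective (h.root_eq_of_pow_eq_pow hr.inv hs.inv hm hrs))

theorem eq_of_isConj_zpow (h : HasUniqueRoots G) {g : G} (hg : g ≠ 1) {i j : ℤ}
    (hij : IsConj (g ^ i) (g ^ j)) : i = j := by
  obtain ⟨x, hx⟩ := isConj_iff.mp hij
  obtain ⟨r, ⟨hr, k, hk, rfl⟩, -⟩ := h g hg
  have hk₀ : (k : ℤ) ≠ 0 := by omega
  have hinj : Function.Injective (fun n : ℤ => r ^ n) :=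
    injective_zpow_iff_not_isOfFinOrder.mpr hr.not_isOfFinOrder
  have hpow (n : ℤ) : (r ^ k) ^ n = r ^ (k * n : ℤ) := by rw [zpow_mul, zpow_natCast]
  rcases eq_or_ne i 0 with rfl | hi
  · have hj : r ^ (k * j : ℤ) = r ^ (k * 0 : ℤ) := by
      rw [← hpow, ← hpow, ← hx, zpow_zero, mul_one, mul_inv_cancel]
    exact (mul_left_cancel₀ hk₀ (hinj hj)).symm
  have hconj : (x * r * x⁻¹) ^ (k * i : ℤ) = r ^ (k * j : ℤ) := by
    rw [conj_zpow, ← hpow, ← hpow, hx]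
  rcases h.root_eq_or_eq_inv_of_zpow_eq (hr.conj x) hr (mul_ne_zero hk₀ hi) hconj with hc | hc
  · rw [hc] at hconj
    exact mul_left_cancel₀ hk₀ (hinj hconj)
  · exact absurd (h.eq_one_of_conj_eq_inv hc) hr.ne_one

end HasUniqueRoots

/-- If `G` has unique roots then: (1) `G` is torsion-free (every `g ≠ 1` has
infinite order), and (2) if `g ≠ 1` and `g^i` is conjugate to `g^j`, then `i = j`. -/
theorem stmt_11 {G : Type*} [Group G] (h : HasUniqueRoots G) :
    (∀ g : G, g ≠ 1 → ¬ IsOfFinOrder g) ∧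
    (∀ g : G, g ≠ 1 → ∀ i j : ℤ, IsConj (g ^ i) (g ^ j) → i = j) :=
  ⟨fun _ => h.not_isOfFinOrder, fun _ hg _ _ => h.eq_of_isConj_zpow hg⟩
end

section
/- Let (Γ, ψ) be a GBS graph and let v ∈ V. If v is redundant, then v admits a set of collapsing data. -/
/-- `vec z ∈ A⁺` for `z ∈ ℤ∖{0}`: the `ℤ/2ℤ` component records the sign of `z`,
and the `i`-th coordinate (`i : ℕ`, corresponding to the `(i+1)`-st prime) is the
exponent of the `(i+1)`-st prime `Nat.nth Nat.Prime i` in the factorization of `|z|`. -/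
noncomputable def vec (z : ℤ) : A :=
  (if 0 < z then 0 else 1,
    Finsupp.comapDomain (Nat.nth Nat.Prime)
      (z.natAbs.factorization.mapRange (fun n : ℕ => (n : ℤ)) (by simp))
      ((Nat.nth_injective Nat.infinite_setOf_prime).injOn))

namespace GBSGraph

variable {V E : Type}

/-- Initial endpoint of an edge in the affine representation: `(ι(e), vec(ψ(ē)))`. -/
noncomputable def affI (G : GBSGraph V E) (e : E) : V × A :=
  (G.ini e, vec (G.label (G.bar e)))

/-- Terminal endpoint of an edge in the affine representation: `(τ(e), vec(ψ(e)))`. -/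
noncomputable def affT (G : GBSGraph V E) (e : E) : V × A :=
  (G.ter e, vec (G.label e))

/-- One step of an affine path: there is an edge `e` and a translation `w ∈ A⁺`
with `ιΛ(e) + w = p` and `τΛ(e) + w = q`. -/
def AffStep (G : GBSGraph V E) (p q : V × A) : Prop :=
  ∃ (e : E) (w : A), Apos w ∧
    ((G.affI e).1, (G.affI e).2 + w) = p ∧ ((G.affT e).1, (G.affT e).2 + w) = q

/-- Conjugacy of points of the affine representation: reachability by affine paths. -/
def Conj (G : GBSGraph V E) : V × A → V × A → Prop :=
  Relation.ReflTransGen (AffStep G)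

/-- A vertex `v` is redundant if `(v, 0)` is conjugate to a point `(u, b)` with
`u ≠ v`. -/
def Redundant (G : GBSGraph V E) (v : V) : Prop :=
  ∃ (u : V) (b : A), u ≠ v ∧ Apos b ∧ G.Conj (v, 0) (u, b)

/-- A set of collapsing data for a vertex `v`: pairwise distinct edges
`es 0, …, es (n−1), e` such that each `es j` goes from `(v, a_j)` to `(v, b_j)`
with `supp(a_j) ⊆ supp(b_0) ∪ … ∪ supp(b_{j−1})`, and `e` goes from `(v, c)` to
`(u, d)` with `u ≠ v` and `supp(c) ⊆ supp(b_0) ∪ … ∪ supp(b_{n−1})`. -/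
def CollapsingData (G : GBSGraph V E) (v : V) (n : ℕ) (es : Fin n → E) (e : E) : Prop :=
  Function.Injective es ∧ (∀ i, es i ≠ e) ∧
  (∀ i, G.ini (es i) = v ∧ G.ter (es i) = v) ∧
  (∀ j : Fin n, suppA (vec (G.label (G.bar (es j)))) ⊆
    (Finset.univ.filter fun i : Fin n => i < j).biUnion
      fun i => suppA (vec (G.label (es i)))) ∧
  G.ini e = v ∧ G.ter e ≠ v ∧
  suppA (vec (G.label (G.bar e))) ⊆
    Finset.univ.biUnion fun i : Fin n => suppA (vec (G.label (es i)))

end GBSGraph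

lemma apos_vec (z : ℤ) : Apos (vec z) := by
  intro i
  simp [vec, Finsupp.comapDomain_apply, Finsupp.mapRange_apply]

lemma support_add_subset_left {x w : ℕ →₀ ℤ} (hx : ∀ i, 0 ≤ x i) (hw : ∀ i, 0 ≤ w i) :
    x.support ⊆ (x + w).support := by
  intro i hi
  simp only [Finsupp.mem_support_iff, Finsupp.add_apply] at *
  have := hx i; have := hw i; omega

lemma support_add_subset_right {x w : ℕ →₀ ℤ} (hx : ∀ i, 0 ≤ x i) (hw : ∀ i, 0 ≤ w i) :
    w.support ⊆ (x + w).support := by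
  intro i hi
  simp only [Finsupp.mem_support_iff, Finsupp.add_apply] at *
  have := hx i; have := hw i; omega

namespace GBSGraph
variable {V E : Type}

/-- The accumulated support of a finite family of edges. -/
noncomputable def bigU (G : GBSGraph V E) {n : ℕ} (es : Fin n → E) : Finset ℕ :=
  Finset.univ.biUnion fun i : Fin n => suppA (vec (G.label (es i)))

/-- Loop data at `v` covering the set `S`. -/
def LoopGood (G : GBSGraph V E) (v : V) (S : Finset ℕ) {n : ℕ} (es : Fin n → E) : Prop :=
  Function.Injective es ∧
  (∀ i, G.ini (es i) = v ∧ G.ter (es i) = v) ∧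
  (∀ j : Fin n, suppA (vec (G.label (G.bar (es j)))) ⊆
    (Finset.univ.filter fun i : Fin n => i < j).biUnion
      fun i => suppA (vec (G.label (es i)))) ∧
  S ⊆ G.bigU es

lemma loopGood_snoc (G : GBSGraph V E) {v : V} {S : Finset ℕ} {n : ℕ} {es : Fin n → E}
    (h : G.LoopGood v S es) (e : E) (he : e ∉ Set.range es)
    (hiv : G.ini e = v) (htv : G.ter e = v)
    (ha : suppA (vec (G.label (G.bar e))) ⊆ G.bigU es) :
    G.LoopGood v (G.bigU es ∪ suppA (vec (G.label e))) (Fin.snoc es e) := by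
  obtain ⟨hinj, hloop, hnest, -⟩ := h
  refine ⟨?_, ?_, ?_, ?_⟩
  · intro i j hij
    rcases Fin.eq_castSucc_or_eq_last i with ⟨i', rfl⟩ | rfl <;>
      rcases Fin.eq_castSucc_or_eq_last j with ⟨j', rfl⟩ | rfl
    · simp only [Fin.snoc_castSucc] at hij
      exact congrArg Fin.castSucc (hinj hij)
    · simp only [Fin.snoc_castSucc, Fin.snoc_last] at hij
      exact absurd ⟨i', hij⟩ he
    · simp only [Fin.snoc_castSucc, Fin.snoc_last] at hij
      exact absurd ⟨j', hij.symm⟩ he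
    · rfl
  · intro i
    rcases Fin.eq_castSucc_or_eq_last i with ⟨i', rfl⟩ | rfl
    · simpa using hloop i'
    · simp [hiv, htv]
  · intro j
    rcases Fin.eq_castSucc_or_eq_last j with ⟨j', rfl⟩ | rfl
    · simp only [Fin.snoc_castSucc]
      intro x hx
      have hx' := hnest j' hx
      rw [Finset.mem_biUnion] at hx' ⊢
      obtain ⟨i, hi, hxi⟩ := hx'
      rw [Finset.mem_filter] at hi
      refine ⟨i.castSucc, ?_, by simpa using hxi⟩
      simp only [Finset.mem_filter, Finset.mem_univ, true_and]
      exact Fin.castSucc_lt_castSucc_iff.mpr hi.2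
    · simp only [Fin.snoc_last]
      intro x hx
      have hx' := ha hx
      rw [bigU, Finset.mem_biUnion] at hx'
      rw [Finset.mem_biUnion]
      obtain ⟨i, -, hxi⟩ := hx'
      refine ⟨i.castSucc, ?_, by simpa using hxi⟩
      simp [Fin.castSucc_lt_last]
  · intro x hx
    rw [Finset.mem_union] at hx
    rw [bigU, Finset.mem_biUnion]
    rcases hx with hx | hx
    · rw [bigU, Finset.mem_biUnion] at hx
      obtain ⟨i, -, hxi⟩ := hx
      exact ⟨i.castSucc, Finset.mem_univ _, by simpa using hxi⟩
    · exact ⟨Fin.last n, Finset.mem_univ _, by simpa using hx⟩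

lemma main_inv (G : GBSGraph V E) (v : V) (p : V × A) (h : G.Conj (v, (0:A)) p) :
    (∃ (n : ℕ) (es : Fin n → E) (e : E), G.CollapsingData v n es e) ∨
    (p.1 = v ∧ ∃ (n : ℕ) (es : Fin n → E), G.LoopGood v (suppA p.2) es) := by
  induction h with
  | refl =>
    right
    refine ⟨rfl, 0, Fin.elim0, (fun i => i.elim0), (fun i => i.elim0), (fun i => i.elim0), ?_⟩
    simp [suppA, bigU]
  | @tail q p hconj hstep ih =>
    rcases ih with hdone | ⟨hq1, n, es, hgood⟩
    · exact Or.inl hdone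
    obtain ⟨e, w, hw, hI, hT⟩ := hstep
    obtain ⟨hI1, hI2⟩ := Prod.ext_iff.mp hI
    obtain ⟨hT1, hT2⟩ := Prod.ext_iff.mp hT
    -- q = (ini e, vec(ψ ē) + w), so ini e = v
    have hie : G.ini e = v := by rw [← hq1, ← hI1]; rfl
    -- supports
    have hq2 : q.2 = vec (G.label (G.bar e)) + w := by rw [← hI2]; rfl
    have hsuppq : suppA q.2 ⊆ G.bigU es := hgood.2.2.2
    have hca : suppA (vec (G.label (G.bar e))) ⊆ G.bigU es := by
      refine Finset.Subset.trans ?_ hsuppq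
      rw [hq2]
      exact support_add_subset_left (apos_vec _) hw
    have hwsupp : (w.2).support ⊆ G.bigU es := by
      refine Finset.Subset.trans ?_ hsuppq
      rw [hq2]
      exact support_add_subset_right (apos_vec _) hw
    have hp2 : p.2 = vec (G.label e) + w := by rw [← hT2]; rfl
    have hsuppP : suppA p.2 ⊆ G.bigU es ∪ suppA (vec (G.label e)) := by
      rw [hp2]
      refine Finset.Subset.trans (Finsupp.support_add) ?_
      intro x hx
      rw [Finset.mem_union] at hx ⊢
      rcases hx with hx | hx
      · exact Or.inr hx
      · exact Or.inl (hwsupp hx)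
    by_cases hte : G.ter e = v
    · -- extend loop data
      right
      refine ⟨by rw [← hT1]; exact hte, ?_⟩
      by_cases hre : e ∈ Set.range es
      · refine ⟨n, es, hgood.1, hgood.2.1, hgood.2.2.1, ?_⟩
        refine Finset.Subset.trans hsuppP ?_
        rw [Finset.union_subset_iff]
        refine ⟨Finset.Subset.refl _, ?_⟩
        obtain ⟨i, rfl⟩ := hre
        rw [bigU]
        exact Finset.subset_biUnion_of_mem
          (fun j : Fin n => suppA (vec (G.label (es j)))) (Finset.mem_univ i)
      · refine ⟨n + 1, Fin.snoc es e, ?_⟩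
        have := G.loopGood_snoc hgood e hre hie hte hca
        exact ⟨this.1, this.2.1, this.2.2.1,
          Finset.Subset.trans hsuppP this.2.2.2⟩
    · -- collapsing data found
      left
      refine ⟨n, es, e, hgood.1, ?_, hgood.2.1, hgood.2.2.1, hie, hte, hca⟩
      intro i hi
      exact hte (hi ▸ (hgood.2.1 i).2)

end GBSGraph


/-- If a vertex of a GBS graph is redundant, then it admits a set of collapsing data. -/
theorem stmt_12 {V E : Type} [Finite V] [Finite E]
    (G : GBSGraph V E) (v : V) (h : G.Redundant v) :
    ∃ (n : ℕ) (es : Fin n → E) (e : E), G.CollapsingData v n es e := by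
  obtain ⟨u, b, huv, -, hconj⟩ := h
  rcases G.main_inv v (u, b) hconj with hdone | ⟨h1, -⟩
  · exact hdone
  · exact absurd h1 huv
end
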